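/- arXiv:cs/0501030 — 2 statements merged into one kernel-verified Lean document; each statement's English description precedes it below -/
import Mathlib

section
/- Let X₁, X₂ be first-order operators (Xᵢ f)(x,y) = mᵢ(x,y) f_x + nᵢ(x,y) f_y with smooth coefficients, and suppose there are smooth functions P, Q : ℝ² → ℝ such that for every smooth f, X₁(X₂ f) − X₂(X₁ f) = P·X₁ f + Q·X₂ f (the commutation law [X₁,X₂] = P X₁ + Q X₂). Let α₁, α₂, α₃ be smooth. Then for every smooth u, X₁(X₂ u) + α₁ X₁ u + α₂ X₂ u + α₃ u = (X₂ + (α₁+P))((X₁ + (α₂+Q)) u) − k·u, where k = X₂(α₂+Q) + (α₁+P)(α₂+Q) − α₃. -/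
/-- Partial derivative with respect to the first variable. -/
noncomputable def pdx (f : ℝ → ℝ → ℝ) : ℝ → ℝ → ℝ := fun x y => deriv (fun s => f s y) x

/-- Partial derivative with respect to the second variable. -/
noncomputable def pdy (f : ℝ → ℝ → ℝ) : ℝ → ℝ → ℝ := fun x y => deriv (fun t => f x t) y

/-- A function of two real variables is smooth. -/
def Smooth2 (f : ℝ → ℝ → ℝ) : Prop := ContDiff ℝ (⊤ : ℕ∞) (Function.uncurry f)

/-- The first-order operator (X f)(x,y) = m(x,y)·f_x(x,y) + n(x,y)·f_y(x,y). -/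
noncomputable def Xop (m n : ℝ → ℝ → ℝ) (f : ℝ → ℝ → ℝ) : ℝ → ℝ → ℝ :=
  fun x y => m x y * pdx f x y + n x y * pdy f x y

lemma diffx {f : ℝ → ℝ → ℝ} (hf : Smooth2 f) (y : ℝ) : Differentiable ℝ (fun s => f s y) := by
  have : (fun s => f s y) = Function.uncurry f ∘ (fun s => (s, y)) := rfl
  rw [this]
  exact (hf.differentiable (by simp)).comp (differentiable_id.prodMk (differentiable_const y))

lemma diffy {f : ℝ → ℝ → ℝ} (hf : Smooth2 f) (x : ℝ) : Differentiable ℝ (fun t => f x t) := by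
  have : (fun t => f x t) = Function.uncurry f ∘ (fun t => (x, t)) := rfl
  rw [this]
  exact (hf.differentiable (by simp)).comp ((differentiable_const x).prodMk differentiable_id)

lemma hasDerivAt_pdx {f : ℝ → ℝ → ℝ} (hf : Smooth2 f) (x y : ℝ) :
    HasDerivAt (fun s => f s y) (fderiv ℝ (Function.uncurry f) (x, y) (1, 0)) x := by
  have h := ((hf.differentiable (by simp)) (x, y)).hasFDerivAt
  have h2 : HasDerivAt (fun s => ((s, y) : ℝ × ℝ)) ((1 : ℝ), (0 : ℝ)) x :=
    (hasDerivAt_id x).prodMk (hasDerivAt_const x y)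
  exact h.comp_hasDerivAt x h2

lemma hasDerivAt_pdy {f : ℝ → ℝ → ℝ} (hf : Smooth2 f) (x y : ℝ) :
    HasDerivAt (fun t => f x t) (fderiv ℝ (Function.uncurry f) (x, y) (0, 1)) y := by
  have h := ((hf.differentiable (by simp)) (x, y)).hasFDerivAt
  have h2 : HasDerivAt (fun t => ((x, t) : ℝ × ℝ)) ((0 : ℝ), (1 : ℝ)) y :=
    (hasDerivAt_const y x).prodMk (hasDerivAt_id y)
  exact h.comp_hasDerivAt y h2

lemma smooth2_pdx {f : ℝ → ℝ → ℝ} (hf : Smooth2 f) : Smooth2 (pdx f) := by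
  have h1 : ContDiff ℝ (⊤ : ℕ∞) (fun p : ℝ × ℝ => fderiv ℝ (Function.uncurry f) p ((1:ℝ), (0:ℝ))) := by
    exact (ContinuousLinearMap.apply ℝ ℝ ((1:ℝ),(0:ℝ))).contDiff.comp (hf.fderiv_right (by simp))
  have : Function.uncurry (pdx f) = fun p : ℝ × ℝ => fderiv ℝ (Function.uncurry f) p ((1:ℝ),(0:ℝ)) := by
    funext p
    exact (hasDerivAt_pdx hf p.1 p.2).deriv
  unfold Smooth2; rw [this]; exact h1

lemma smooth2_pdy {f : ℝ → ℝ → ℝ} (hf : Smooth2 f) : Smooth2 (pdy f) := by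
  have h1 : ContDiff ℝ (⊤ : ℕ∞) (fun p : ℝ × ℝ => fderiv ℝ (Function.uncurry f) p ((0:ℝ), (1:ℝ))) := by
    exact (ContinuousLinearMap.apply ℝ ℝ ((0:ℝ),(1:ℝ))).contDiff.comp (hf.fderiv_right (by simp))
  have : Function.uncurry (pdy f) = fun p : ℝ × ℝ => fderiv ℝ (Function.uncurry f) p ((0:ℝ),(1:ℝ)) := by
    funext p
    exact (hasDerivAt_pdy hf p.1 p.2).deriv
  unfold Smooth2; rw [this]; exact h1

lemma Smooth2.add' {f g : ℝ → ℝ → ℝ} (hf : Smooth2 f) (hg : Smooth2 g) :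
    Smooth2 (fun x y => f x y + g x y) := hf.add hg

lemma Smooth2.mul' {f g : ℝ → ℝ → ℝ} (hf : Smooth2 f) (hg : Smooth2 g) :
    Smooth2 (fun x y => f x y * g x y) := hf.mul hg

lemma smooth2_Xop {m n f : ℝ → ℝ → ℝ} (hm : Smooth2 m) (hn : Smooth2 n) (hf : Smooth2 f) :
    Smooth2 (Xop m n f) :=
  (hm.mul' (smooth2_pdx hf)).add' (hn.mul' (smooth2_pdy hf))

lemma Xop_add {m n f g : ℝ → ℝ → ℝ} (hf : Smooth2 f) (hg : Smooth2 g) (x y : ℝ) :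
    Xop m n (fun x y => f x y + g x y) x y = Xop m n f x y + Xop m n g x y := by
  have hx : pdx (fun x y => f x y + g x y) x y = pdx f x y + pdx g x y :=
    deriv_add (diffx hf y x) (diffx hg y x)
  have hy : pdy (fun x y => f x y + g x y) x y = pdy f x y + pdy g x y :=
    deriv_add (diffy hf x y) (diffy hg x y)
  simp only [Xop, hx, hy]; ring

lemma Xop_mul {m n f g : ℝ → ℝ → ℝ} (hf : Smooth2 f) (hg : Smooth2 g) (x y : ℝ) :
    Xop m n (fun x y => f x y * g x y) x y
      = Xop m n f x y * g x y + f x y * Xop m n g x y := by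
  have hx : pdx (fun x y => f x y * g x y) x y = pdx f x y * g x y + f x y * pdx g x y :=
    deriv_mul (diffx hf y x) (diffx hg y x)
  have hy : pdy (fun x y => f x y * g x y) x y = pdy f x y * g x y + f x y * pdy g x y :=
    deriv_mul (diffy hf x y) (diffy hg x y)
  simp only [Xop, hx, hy]; ring

/-- Second partial factorization of L = X₁X₂ + α₁X₁ + α₂X₂ + α₃ as
    L = (X₂+(α₁+P))∘(X₁+(α₂+Q)) − k, given the commutation law
    [X₁,X₂] = P X₁ + Q X₂, with k = X₂(α₂+Q) + (α₁+P)(α₂+Q) − α₃. -/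
theorem partial_factorization_second
    (m₁ n₁ m₂ n₂ α₁ α₂ α₃ P Q : ℝ → ℝ → ℝ)
    (hm₁ : Smooth2 m₁) (hn₁ : Smooth2 n₁) (hm₂ : Smooth2 m₂) (hn₂ : Smooth2 n₂)
    (hα₁ : Smooth2 α₁) (hα₂ : Smooth2 α₂) (hα₃ : Smooth2 α₃)
    (hP : Smooth2 P) (hQ : Smooth2 Q)
    (hcomm : ∀ f : ℝ → ℝ → ℝ, Smooth2 f → ∀ x y : ℝ,
      Xop m₁ n₁ (Xop m₂ n₂ f) x y - Xop m₂ n₂ (Xop m₁ n₁ f) x y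
        = P x y * Xop m₁ n₁ f x y + Q x y * Xop m₂ n₂ f x y)
    (u : ℝ → ℝ → ℝ) (hu : Smooth2 u) :
    ∀ x y : ℝ,
      Xop m₁ n₁ (Xop m₂ n₂ u) x y + α₁ x y * Xop m₁ n₁ u x y
          + α₂ x y * Xop m₂ n₂ u x y + α₃ x y * u x y
        = (Xop m₂ n₂ (fun x y => Xop m₁ n₁ u x y + (α₂ x y + Q x y) * u x y) x y
            + (α₁ x y + P x y) * (Xop m₁ n₁ u x y + (α₂ x y + Q x y) * u x y))
          - (Xop m₂ n₂ (fun x y => α₂ x y + Q x y) x y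
              + (α₁ x y + P x y) * (α₂ x y + Q x y) - α₃ x y) * u x y := by
  intro x y
  have hB : Smooth2 (fun x y => α₂ x y + Q x y) := hα₂.add' hQ
  have hBu : Smooth2 (fun x y => (α₂ x y + Q x y) * u x y) := hB.mul' hu
  have hA : Smooth2 (Xop m₁ n₁ u) := smooth2_Xop hm₁ hn₁ hu
  rw [Xop_add hA hBu, Xop_mul hB hu]
  linear_combination hcomm u hu x y
end

section
/- Let u₁, u₂, u₃ : ℝ² → ℝ be smooth functions satisfying the characteristic system ∂x u₁ = u₁ + 2u₂ + u₃, ∂y u₂ = −6u₁ + u₂ + 2u₃, (∂x + ∂y)u₃ = 12u₁ + 6u₂ + u₃. Define ū₂ := u₂ + 2u₁ and ū₃ := (∂x + ∂y)u₁ − u₁ − 2ū₂. Then (u₁, ū₂, ū₃) satisfies the transformed characteristic system ∂x ū₃ = ū₃, ∂y ū₂ = 2ū₃ + ū₂, (∂x + ∂y)u₁ = ū₃ + 2ū₂ + u₁. -/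
/-- ū₂ := u₂ + 2u₁. -/
noncomputable def ubar₂ (u₁ u₂ : ℝ → ℝ → ℝ) : ℝ → ℝ → ℝ :=
  fun x y => u₂ x y + 2 * u₁ x y

/-- ū₃ := (∂x+∂y)u₁ − u₁ − 2ū₂. -/
noncomputable def ubar₃ (u₁ u₂ : ℝ → ℝ → ℝ) : ℝ → ℝ → ℝ :=
  fun x y => pdx u₁ x y + pdy u₁ x y - u₁ x y - 2 * ubar₂ u₁ u₂ x y

open Function

lemma hdx (f : ℝ → ℝ → ℝ) (hf : Smooth2 f) (x y : ℝ) :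
    HasDerivAt (fun s => f s y) (fderiv ℝ (uncurry f) (x, y) (1, 0)) x := by
  have hF := ((hf.differentiable (by simp)) (x, y)).hasFDerivAt
  have hγ : HasDerivAt (fun s : ℝ => (s, y)) ((1 : ℝ), (0 : ℝ)) x :=
    (hasDerivAt_id x).prodMk (hasDerivAt_const x y)
  exact hF.comp_hasDerivAt x hγ

lemma hdy (f : ℝ → ℝ → ℝ) (hf : Smooth2 f) (x y : ℝ) :
    HasDerivAt (fun t => f x t) (fderiv ℝ (uncurry f) (x, y) (0, 1)) y := by
  have hF := ((hf.differentiable (by simp)) (x, y)).hasFDerivAt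
  have hγ : HasDerivAt (fun t : ℝ => (x, t)) ((0 : ℝ), (1 : ℝ)) y :=
    (hasDerivAt_const y x).prodMk (hasDerivAt_id y)
  exact hF.comp_hasDerivAt y hγ

lemma pdx_eq (f : ℝ → ℝ → ℝ) (hf : Smooth2 f) (x y : ℝ) :
    pdx f x y = fderiv ℝ (uncurry f) (x, y) (1, 0) := (hdx f hf x y).deriv

lemma pdy_eq (f : ℝ → ℝ → ℝ) (hf : Smooth2 f) (x y : ℝ) :
    pdy f x y = fderiv ℝ (uncurry f) (x, y) (0, 1) := (hdy f hf x y).deriv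

lemma hG (f : ℝ → ℝ → ℝ) (hf : Smooth2 f) :
    ContDiff ℝ (⊤ : ℕ∞) (fderiv ℝ (uncurry f)) := hf.fderiv_right (by simp)

lemma hdx_pdy (f : ℝ → ℝ → ℝ) (hf : Smooth2 f) (x y : ℝ) :
    HasDerivAt (fun s => pdy f s y)
      (fderiv ℝ (fderiv ℝ (uncurry f)) (x, y) (1, 0) (0, 1)) x := by
  have hg := hG f hf
  have hγ : HasDerivAt (fun s : ℝ => (s, y)) ((1 : ℝ), (0 : ℝ)) x :=
    (hasDerivAt_id x).prodMk (hasDerivAt_const x y)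
  have h1 : HasDerivAt (fun s : ℝ => fderiv ℝ (uncurry f) (s, y))
      (fderiv ℝ (fderiv ℝ (uncurry f)) (x, y) (1, 0)) x :=
    ((hg.differentiable (by simp)) (x, y)).hasFDerivAt.comp_hasDerivAt x hγ
  have h2 : HasDerivAt (fun s : ℝ => fderiv ℝ (uncurry f) (s, y) (0, 1))
      (fderiv ℝ (fderiv ℝ (uncurry f)) (x, y) (1, 0) (0, 1)) x :=
    (ContinuousLinearMap.apply ℝ ℝ ((0 : ℝ), (1 : ℝ))).hasFDerivAt.comp_hasDerivAt x h1
  have : (fun s : ℝ => pdy f s y) = fun s : ℝ => fderiv ℝ (uncurry f) (s, y) (0, 1) := by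
    funext s; exact pdy_eq f hf s y
  rw [this]; exact h2

lemma hdy_pdx (f : ℝ → ℝ → ℝ) (hf : Smooth2 f) (x y : ℝ) :
    HasDerivAt (fun t => pdx f x t)
      (fderiv ℝ (fderiv ℝ (uncurry f)) (x, y) (0, 1) (1, 0)) y := by
  have hg := hG f hf
  have hγ : HasDerivAt (fun t : ℝ => (x, t)) ((0 : ℝ), (1 : ℝ)) y :=
    (hasDerivAt_const y x).prodMk (hasDerivAt_id y)
  have h1 : HasDerivAt (fun t : ℝ => fderiv ℝ (uncurry f) (x, t))
      (fderiv ℝ (fderiv ℝ (uncurry f)) (x, y) (0, 1)) y :=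
    ((hg.differentiable (by simp)) (x, y)).hasFDerivAt.comp_hasDerivAt y hγ
  have h2 : HasDerivAt (fun t : ℝ => fderiv ℝ (uncurry f) (x, t) (1, 0))
      (fderiv ℝ (fderiv ℝ (uncurry f)) (x, y) (0, 1) (1, 0)) y :=
    (ContinuousLinearMap.apply ℝ ℝ ((1 : ℝ), (0 : ℝ))).hasFDerivAt.comp_hasDerivAt y h1
  have : (fun t : ℝ => pdx f x t) = fun t : ℝ => fderiv ℝ (uncurry f) (x, t) (1, 0) := by
    funext t; exact pdx_eq f hf x t
  rw [this]; exact h2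

lemma mixed_symm (f : ℝ → ℝ → ℝ) (hf : Smooth2 f) (x y : ℝ) :
    pdx (pdy f) x y = pdy (pdx f) x y := by
  have hsymm : IsSymmSndFDerivAt ℝ (uncurry f) (x, y) := by
    apply hf.contDiffAt.isSymmSndFDerivAt
    rw [minSmoothness_of_isRCLikeNormedField]
    exact WithTop.coe_le_coe.mpr le_top
  have h1 := (hdx_pdy f hf x y).deriv
  have h2 := (hdy_pdx f hf x y).deriv
  show deriv (fun s => pdy f s y) x = deriv (fun t => pdx f x t) y
  rw [h1, h2, hsymm.eq]

/-- The generalized Laplace transformation of the 3×3 characteristic system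
    ∂x u₁ = u₁+2u₂+u₃, ∂y u₂ = −6u₁+u₂+2u₃, (∂x+∂y)u₃ = 12u₁+6u₂+u₃ produces the
    upper-triangular system ∂x ū₃ = ū₃, ∂y ū₂ = 2ū₃+ū₂, (∂x+∂y)u₁ = ū₃+2ū₂+u₁. -/
theorem generalized_laplace_transform_3x3
    (u₁ u₂ u₃ : ℝ → ℝ → ℝ)
    (hu₁ : Smooth2 u₁) (hu₂ : Smooth2 u₂) (hu₃ : Smooth2 u₃)
    (e₁ : ∀ x y : ℝ, pdx u₁ x y = u₁ x y + 2 * u₂ x y + u₃ x y)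
    (e₂ : ∀ x y : ℝ, pdy u₂ x y = -6 * u₁ x y + u₂ x y + 2 * u₃ x y)
    (e₃ : ∀ x y : ℝ, pdx u₃ x y + pdy u₃ x y = 12 * u₁ x y + 6 * u₂ x y + u₃ x y) :
    (∀ x y : ℝ, pdx (ubar₃ u₁ u₂) x y = ubar₃ u₁ u₂ x y) ∧
    (∀ x y : ℝ, pdy (ubar₂ u₁ u₂) x y = 2 * ubar₃ u₁ u₂ x y + ubar₂ u₁ u₂ x y) ∧
    (∀ x y : ℝ, pdx u₁ x y + pdy u₁ x y
        = ubar₃ u₁ u₂ x y + 2 * ubar₂ u₁ u₂ x y + u₁ x y) := by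
  -- simplified form of ū₃ using e₁
  have hbar3 : ∀ x y : ℝ, ubar₃ u₁ u₂ x y = u₃ x y + pdy u₁ x y - 4 * u₁ x y := by
    intro x y
    simp only [ubar₃, ubar₂, e₁ x y]
    ring
  refine ⟨?_, ?_, ?_⟩
  · intro x y
    have hequ : ubar₃ u₁ u₂ = fun x y => u₃ x y + pdy u₁ x y - 4 * u₁ x y :=
      funext fun x => funext fun y => hbar3 x y
    rw [hequ]
    -- derivative in x of u₃ + pdy u₁ - 4 u₁
    have h : HasDerivAt (fun s => u₃ s y + pdy u₁ s y - 4 * u₁ s y)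
        (pdx u₃ x y + pdx (pdy u₁) x y - 4 * pdx u₁ x y) x := by
      have h3 := hdx u₃ hu₃ x y
      have hm := hdx_pdy u₁ hu₁ x y
      have h1 := (hdx u₁ hu₁ x y).const_mul (4 : ℝ)
      rw [← pdx_eq u₃ hu₃ x y] at h3
      rw [← pdx_eq u₁ hu₁ x y] at h1
      have hm' : HasDerivAt (fun s => pdy u₁ s y) (pdx (pdy u₁) x y) x := by
        have : pdx (pdy u₁) x y
            = fderiv ℝ (fderiv ℝ (uncurry u₁)) (x, y) (1, 0) (0, 1) :=
          (hdx_pdy u₁ hu₁ x y).deriv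
        rw [this]; exact hm
      exact (h3.add hm').sub h1
    have hderiv : pdx (fun x y => u₃ x y + pdy u₁ x y - 4 * u₁ x y) x y
        = pdx u₃ x y + pdx (pdy u₁) x y - 4 * pdx u₁ x y := h.deriv
    rw [hderiv, mixed_symm u₁ hu₁ x y]
    -- pdy (pdx u₁) = pdy u₁ + 2 pdy u₂ + pdy u₃
    have hpx : pdx u₁ = fun x y => u₁ x y + 2 * u₂ x y + u₃ x y :=
      funext fun x => funext fun y => e₁ x y
    have hyy : pdy (pdx u₁) x y = pdy u₁ x y + 2 * pdy u₂ x y + pdy u₃ x y := by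
      rw [hpx]
      have h1 := hdy u₁ hu₁ x y
      have h2 := (hdy u₂ hu₂ x y).const_mul (2 : ℝ)
      have h3 := hdy u₃ hu₃ x y
      rw [← pdy_eq u₁ hu₁ x y] at h1
      rw [← pdy_eq u₂ hu₂ x y] at h2
      rw [← pdy_eq u₃ hu₃ x y] at h3
      exact ((h1.add h2).add h3).deriv
    rw [hyy, e₂ x y, e₁ x y]
    have he3 := e₃ x y
    beta_reduce
    linarith
  · intro x y
    have h : pdy (ubar₂ u₁ u₂) x y = pdy u₂ x y + 2 * pdy u₁ x y := by
      have h2 := hdy u₂ hu₂ x y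
      have h1 := (hdy u₁ hu₁ x y).const_mul (2 : ℝ)
      rw [← pdy_eq u₂ hu₂ x y] at h2
      rw [← pdy_eq u₁ hu₁ x y] at h1
      exact (h2.add h1).deriv
    rw [h, e₂ x y, hbar3 x y]
    simp only [ubar₂]
    ring
  · intro x y
    simp only [ubar₃]
    ring
end
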